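/- arXiv:0802.0075 — 8 statements merged into one kernel-verified Lean document; each statement's English description precedes it below -/
import Mathlib

section
/- For every natural number n, the Motzkin number m_n = Σ_{k=0}^{⌊n/2⌋} n!/(k!(k+1)!(n-2k)!) satisfies (n+1)·m_n = binom2(n+1, 1), where binom2(n,m) = Σ_{j≥0} n!/(j!(m+j)!(n-2j-m)!). -/
open Finset

noncomputable def binom2 (n : ℕ) (m : ℤ) : ℚ :=
  ∑ j ∈ Finset.range (n + 1),
    if 0 ≤ m + j ∧ 0 ≤ (n : ℤ) - 2 * j - m then
      (n.factorial : ℚ) /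
        ((j.factorial : ℚ) * ((m + j).toNat.factorial : ℚ) *
          (((n : ℤ) - 2 * j - m).toNat.factorial : ℚ))
    else 0

noncomputable def motzkin (n : ℕ) : ℚ :=
  ∑ k ∈ Finset.range (n / 2 + 1),
    (n.factorial : ℚ) / ((k.factorial : ℚ) * ((k + 1).factorial : ℚ) * ((n - 2 * k).factorial : ℚ))

theorem motzkin_eq_binom2 (n : ℕ) :
    ((n : ℚ) + 1) * motzkin n = binom2 (n + 1) 1 := by
  unfold binom2 motzkin
  rw [Finset.mul_sum]
  rw [← Finset.sum_subset
      (Finset.range_subset_range.2 (by omega) : Finset.range (n / 2 + 1) ⊆ Finset.range (n + 1 + 1))]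
  · apply Finset.sum_congr rfl
    intro j hj
    simp only [Finset.mem_range] at hj
    have h2 : 2 * j ≤ n := by omega
    rw [if_pos]
    · have h1 : ((1 : ℤ) + j).toNat = j + 1 := by omega
      have h3 : (((n : ℕ) + 1 : ℕ) : ℤ) - 2 * j - 1 = ((n - 2 * j : ℕ) : ℤ) := by
        push_cast; omega
      rw [h1, h3, Int.toNat_natCast, Nat.factorial_succ]
      have d1 : (j.factorial : ℚ) ≠ 0 := Nat.cast_ne_zero.2 j.factorial_ne_zero
      have d2 : (((j + 1).factorial : ℕ) : ℚ) ≠ 0 := Nat.cast_ne_zero.2 (j + 1).factorial_ne_zero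
      have d3 : (((n - 2 * j).factorial : ℕ) : ℚ) ≠ 0 :=
        Nat.cast_ne_zero.2 (n - 2 * j).factorial_ne_zero
      push_cast
      field_simp
      rw [Nat.factorial_succ]
      push_cast
      ring
    · constructor
      · positivity
      · push_cast; omega
  · intro j hj hj'
    simp only [Finset.mem_range] at hj hj'
    rw [if_neg]
    rintro ⟨-, h⟩
    push_cast at h
    omega
end

section
/- For all real x, y with y^2 - 4x ≠ 0 and every natural number n, the hybrid polynomial Π_n(x,y) = n! Σ_{k=0}^{⌊n/2⌋} y^{n-2k} x^k / ((k!)^2 (n-2k)!) equals (y^2 - 4x)^{n/2} · P_n(y/√(y^2-4x)), where P_n is the n-th Legendre polynomial (interpreted via the polynomial identity obtained by clearing square roots when y^2 - 4x < 0). -/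
open Finset

/-- Hybrid Hermite–Laguerre polynomial. -/
noncomputable def hybridPi (n : ℕ) (x y : ℂ) : ℂ :=
  (n.factorial : ℂ) * ∑ k ∈ Finset.range (n / 2 + 1),
    y ^ (n - 2 * k) * x ^ k / ((k.factorial : ℂ) ^ 2 * ((n - 2 * k).factorial : ℂ))

/-- Legendre polynomial of degree `n`, evaluated over `ℂ`. -/
noncomputable def legendreC (n : ℕ) (z : ℂ) : ℂ :=
  (1 / 2 ^ n) * ∑ k ∈ Finset.range (n / 2 + 1),
    (-1) ^ k * (n.choose k : ℂ) * ((2 * n - 2 * k).choose n : ℂ) * z ^ (n - 2 * k)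


open Polynomial in
private lemma key1 (m n : ℕ) (h1 : m ≤ n) (h2 : n ≤ 2*m) :
    ∑ i ∈ Finset.range (m+1), (-1:ℤ)^(i+m) * (m.choose i) * ((2*i).choose n)
      = 2^(2*m-n) * (m.choose (n-m)) := by
  have hA : (((1 + X : ℤ[X])^2 - 1)^m).coeff n
      = ∑ i ∈ Finset.range (m+1), (-1:ℤ)^(i+m) * (m.choose i) * ((2*i).choose n) := by
    rw [sub_pow, Polynomial.finset_sum_coeff]
    refine Finset.sum_congr rfl fun i hi => ?_
    rw [one_pow, mul_one, ← pow_mul]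
    have : ((-1:ℤ[X]) ^ (i + m) * (1 + X) ^ (2*i) * (m.choose i : ℤ[X]))
        = Polynomial.C ((-1:ℤ)^(i+m) * (m.choose i)) * (1 + X) ^ (2*i) := by
      rw [map_mul, map_pow, map_neg, map_one, Polynomial.C_eq_natCast]
      ring
    rw [this, Polynomial.coeff_C_mul, Polynomial.coeff_one_add_X_pow]
  have hB : ((1 + X : ℤ[X])^2 - 1)^m = X^m * (X + Polynomial.C 2)^m := by
    rw [← mul_pow]
    congr 1
    simp only [map_ofNat]
    ring
  rw [← hA, hB, Polynomial.coeff_X_pow_mul' _ _ _ , if_pos h1, Polynomial.coeff_X_add_C_pow]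
  have : m - (n - m) = 2*m - n := by omega
  rw [this]

private lemma key2 (n j : ℕ) (hj : j ≤ n/2) :
    ∑ k ∈ Finset.Icc j (n/2), (-1:ℤ)^(k+j) * (n.choose k) * ((2*n-2*k).choose n) * (k.choose j)
      = 2^(n-2*j) * (n.choose j) * ((n-j).choose j) := by
  have hstep : ∀ k ∈ Finset.Icc j (n/2),
      (-1:ℤ)^(k+j) * (n.choose k) * ((2*n-2*k).choose n) * (k.choose j)
        = (n.choose j : ℤ) * ((-1)^(k-j) * (((n-j)).choose (k-j)) * ((2*((n-j)-(k-j))).choose n)) := by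
    intro k hk
    rw [Finset.mem_Icc] at hk
    have h1 : j ≤ k := hk.1
    have h2 : k ≤ n := le_trans hk.2 (Nat.div_le_self n 2)
    have hc : n.choose k * k.choose j = n.choose j * (n-j).choose (k-j) := Nat.choose_mul h1
    have hc' : (n.choose k : ℤ) * (k.choose j) = (n.choose j : ℤ) * ((n-j).choose (k-j)) := by
      exact_mod_cast congrArg (Nat.cast : ℕ → ℤ) hc
    have hsgn : (-1:ℤ)^(k+j) = (-1)^(k-j) := by
      have h3 : k + j = (k - j) + 2*j := by omega
      rw [h3, pow_add, pow_mul]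
      simp
    have h2n : 2*n - 2*k = 2*((n-j)-(k-j)) := by omega
    rw [hsgn, h2n]
    linear_combination ((-1:ℤ)^(k-j) * (((2 * ((n-j) - (k - j))).choose n : ℤ))) * hc'
  rw [Finset.sum_congr rfl hstep, ← Finset.mul_sum]
  have hIcc : Finset.Icc j (n/2) = Finset.Ico j (n/2+1) := by rw [Finset.Ico_add_one_right_eq_Icc]
  rw [hIcc, Finset.sum_Ico_eq_sum_range]
  simp only [Nat.add_sub_cancel_left]
  have hsub : Finset.range (n/2+1-j) ⊆ Finset.range ((n-j)+1) := by
    apply Finset.range_subset_range.2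
    omega
  rw [Finset.sum_subset hsub (by
    intro i hi hni
    rw [Finset.mem_range] at hi hni
    have hz : 2*((n-j)-i) < n := by omega
    rw [Nat.choose_eq_zero_of_lt hz]
    simp)]
  rw [← Finset.sum_range_reflect]
  have hre : ∀ i ∈ Finset.range ((n-j)+1),
      (-1:ℤ)^((n-j)+1-1-i) * (((n-j)).choose ((n-j)+1-1-i)) * ((2*((n-j)-((n-j)+1-1-i))).choose n)
        = (-1:ℤ)^(i+(n-j)) * (((n-j)).choose i) * ((2*i).choose n) := by
    intro i hi
    rw [Finset.mem_range] at hi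
    have e1 : (n-j)+1-1-i = (n-j)-i := by omega
    have e2 : (n-j) - ((n-j)-i) = i := by omega
    have e3 : (n-j).choose ((n-j)-i) = (n-j).choose i := Nat.choose_symm (by omega)
    have e4 : (-1:ℤ)^((n-j)-i) = (-1)^(i+(n-j)) := by
      have h3 : i + (n-j) = ((n-j)-i) + 2*i := by omega
      rw [h3, pow_add, pow_mul]
      simp
    rw [e1, e2, ← e4, e3]
  rw [Finset.sum_congr rfl hre, key1 (n-j) n (by omega) (by omega)]
  have e5 : 2*(n-j) - n = n - 2*j := by omega
  have e6 : n - (n-j) = j := by omega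
  rw [e5, e6]
  ring

/-- `Π_n(x,y) = (y² - 4x)^{n/2} P_n(y/√(y²-4x))`, stated over `ℂ` for any
choice `s` of the square root of `y² - 4x`. -/
theorem hybridPi_eq_legendre (n : ℕ) (x y : ℂ) (h : y ^ 2 - 4 * x ≠ 0)
    (s : ℂ) (hs : s ^ 2 = y ^ 2 - 4 * x) :
    hybridPi n x y = s ^ n * legendreC n (y / s) := by
  have hs0 : s ≠ 0 := by
    intro h0
    rw [h0] at hs
    simp only [ne_eq, zero_pow, OfNat.ofNat_ne_zero, not_false_eq_true] at hs
    exact h hs.symm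
  set F : ℕ → ℕ → ℂ := fun k j =>
    (1/2^n : ℂ) * ((-1)^(k+j) * (n.choose k) * ((2*n-2*k).choose n) * (k.choose j) * 4^j)
      * (y^(n-2*k) * (y^2)^(k-j) * x^j) with hF
  have hRHS : s ^ n * legendreC n (y / s)
      = ∑ k ∈ Finset.range (n/2+1), ∑ j ∈ Finset.range (n/2+1), F k j := by
    rw [legendreC, Finset.mul_sum, Finset.mul_sum]
    refine Finset.sum_congr rfl fun k hk => ?_
    rw [Finset.mem_range] at hk
    have h2k : 2*k ≤ n := by omega
    have step1 : s ^ n * ((1/2^n : ℂ) * ((-1) ^ k * (n.choose k : ℂ) *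
          ((2 * n - 2 * k).choose n : ℂ) * (y / s) ^ (n - 2 * k)))
        = (1/2^n : ℂ) * ((-1) ^ k * (n.choose k : ℂ) * ((2 * n - 2 * k).choose n : ℂ))
          * (y^(n-2*k) * (y^2-4*x)^k) := by
      have hsn : s^n = s^(n-2*k) * (s^2)^k := by
        rw [← pow_mul, ← pow_add]
        congr 1
        omega
      rw [div_pow, hsn, hs]
      have hne : (s:ℂ)^(n-2*k) ≠ 0 := pow_ne_zero _ hs0
      rw [← hs]
      field_simp
    rw [step1]
    have hexp : (y^2 - 4*x)^k = ∑ j ∈ Finset.range (k+1),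
        (-(4*x))^j * (y^2)^(k-j) * (k.choose j) := by
      have : y^2 - 4*x = -(4*x) + y^2 := by ring
      rw [this, add_pow]
    rw [hexp, Finset.mul_sum, Finset.mul_sum]
    rw [Finset.sum_subset (Finset.range_subset_range.2 (by omega : k+1 ≤ n/2+1))
      (by
        intro j hj hnj
        rw [Finset.mem_range] at hj hnj
        rw [Nat.choose_eq_zero_of_lt (by omega : k < j)]
        simp)]
    refine Finset.sum_congr rfl fun j hj => ?_
    rw [hF]
    simp only
    rw [pow_add, neg_pow (4*x) j]
    ring
  rw [hRHS, Finset.sum_comm]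
  rw [hybridPi, Finset.mul_sum]
  refine Finset.sum_congr rfl fun j hj => ?_
  rw [Finset.mem_range] at hj
  have hjn : j ≤ n/2 := by omega
  rw [← Finset.sum_subset (by
      intro k hk
      rw [Finset.mem_Icc] at hk
      rw [Finset.mem_range]
      omega : Finset.Icc j (n/2) ⊆ Finset.range (n/2+1))
    (by
      intro k hk hnk
      rw [Finset.mem_range] at hk
      rw [Finset.mem_Icc] at hnk
      have hkj : k < j := by omega
      rw [hF]
      simp only
      rw [Nat.choose_eq_zero_of_lt hkj]
      simp)]
  have hterm : ∀ k ∈ Finset.Icc j (n/2), F k j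
      = ((1/2^n : ℂ) * 4^j * (y^(n-2*j) * x^j))
        * ((-1)^(k+j) * (n.choose k) * ((2*n-2*k).choose n) * (k.choose j)) := by
    intro k hk
    rw [Finset.mem_Icc] at hk
    have hy : y^(n-2*k) * (y^2)^(k-j) = y^(n-2*j) := by
      rw [← pow_mul, ← pow_add]
      congr 1
      omega
    rw [hF]
    simp only
    rw [← hy]
    ring
  rw [Finset.sum_congr rfl hterm, ← Finset.mul_sum]
  have hkey : ∑ k ∈ Finset.Icc j (n/2),
      ((-1:ℂ)^(k+j) * (n.choose k) * ((2*n-2*k).choose n) * (k.choose j))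
      = 2^(n-2*j) * (n.choose j) * ((n-j).choose j) := by
    exact_mod_cast key2 n j hjn
  rw [hkey]
  have hch1 : (n.choose j : ℂ) = (n.factorial : ℂ) / ((j.factorial : ℂ) * ((n-j).factorial : ℂ)) :=
    Nat.cast_choose ℂ (by omega)
  have hch2 : ((n-j).choose j : ℂ)
      = ((n-j).factorial : ℂ) / ((j.factorial : ℂ) * ((n-2*j).factorial : ℂ)) := by
    have := Nat.cast_choose ℂ (by omega : j ≤ n - j)
    rwa [(by omega : n - j - j = n - 2*j)] at this
  have h4 : (4:ℂ)^j * 2^(n-2*j) = 2^n := by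
    have : (4:ℂ)^j = 2^(2*j) := by
      rw [pow_mul]
      norm_num
    rw [this, ← pow_add]
    congr 1
    omega
  rw [hch1, hch2]
  have hf1 : (j.factorial : ℂ) ≠ 0 := Nat.cast_ne_zero.2 (Nat.factorial_ne_zero j)
  have hf2 : ((n-j).factorial : ℂ) ≠ 0 := Nat.cast_ne_zero.2 (Nat.factorial_ne_zero _)
  have hf3 : ((n-2*j).factorial : ℂ) ≠ 0 := Nat.cast_ne_zero.2 (Nat.factorial_ne_zero _)
  have h2 : (2:ℂ)^n ≠ 0 := pow_ne_zero _ two_ne_zero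
  field_simp
  linear_combination (-(n.factorial:ℂ) * y ^ (n - 2*j) * x ^ j) * h4
end

section
/- For every natural number n, the central trinomial coefficient satisfies c_n = i^n · 3^{n/2} · P_n(-i/√3), where P_n is the Legendre polynomial and the right-hand side is a complex number (which is in fact a positive integer). -/
open Finset Complex

noncomputable def centralTrinomial (n : ℕ) : ℚ :=
  ∑ k ∈ Finset.range (n / 2 + 1),
    (n.factorial : ℚ) / ((k.factorial : ℚ) ^ 2 * ((n - 2 * k).factorial : ℚ))

open Polynomial

-- termwise factorial identity
lemma term_eq {K : Type*} [Field K] [CharZero K] (n k : ℕ) (h : 2 * k ≤ n) :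
    (n.factorial : K) / ((k.factorial : K) ^ 2 * ((n - 2 * k).factorial : K)) =
      (n.choose k : K) * ((n - k).choose k : K) := by
  have hk : k ≤ n := by omega
  have hk2 : k ≤ n - k := by omega
  have h1 : n.choose k * k.factorial * (n - k).factorial = n.factorial :=
    Nat.choose_mul_factorial_mul_factorial hk
  have h2 : (n - k).choose k * k.factorial * (n - k - k).factorial = (n - k).factorial :=
    Nat.choose_mul_factorial_mul_factorial hk2
  have hnk : n - k - k = n - 2 * k := by omega
  rw [hnk] at h2
  have key : n.choose k * ((n - k).choose k) * (k.factorial * k.factorial * (n - 2 * k).factorial)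
      = n.factorial := by
    calc n.choose k * ((n - k).choose k) * (k.factorial * k.factorial * (n - 2 * k).factorial)
        = n.choose k * k.factorial * ((n - k).choose k * k.factorial * (n - 2 * k).factorial) := by
          ring
      _ = n.choose k * k.factorial * (n - k).factorial := by rw [h2]
      _ = n.factorial := h1
  have hpos : ((k.factorial : K) ^ 2 * ((n - 2 * k).factorial : K)) ≠ 0 :=
    mul_ne_zero (pow_ne_zero _ (Nat.cast_ne_zero.2 k.factorial_ne_zero))
      (Nat.cast_ne_zero.2 (n - 2 * k).factorial_ne_zero)
  rw [div_eq_iff hpos, ← key]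
  push_cast
  ring

lemma coeffB (n : ℕ) :
    ((((X : ℚ[X]) ^ 2 + C 2 * (X + C 2)) ^ n)).coeff n =
      2 ^ n * ∑ k ∈ Finset.range (n / 2 + 1), ((n.choose k : ℚ) * ((n - k).choose k : ℚ)) := by
  rw [add_pow, finset_sum_coeff]
  have hterm : ∀ k ∈ Finset.range (n + 1),
      ((X ^ 2) ^ k * (C 2 * (X + C 2)) ^ (n - k) * (n.choose k : ℚ[X])).coeff n =
        if 2 * k ≤ n then 2 ^ n * ((n.choose k : ℚ) * ((n - k).choose k : ℚ)) else 0 := by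
    intro k hk
    rw [Finset.mem_range] at hk
    rw [← pow_mul, mul_assoc, coeff_X_pow_mul']
    by_cases h : 2 * k ≤ n
    · rw [if_pos h, if_pos h]
      rw [mul_pow, ← C_pow, ← C_eq_natCast, mul_assoc, coeff_C_mul, coeff_mul_C,
        coeff_X_add_C_pow]
      have e1 : n - k - (n - 2 * k) = k := by omega
      have e2 : (n - k).choose (n - 2 * k) = (n - k).choose k := by
        rw [← Nat.choose_symm (by omega : n - 2 * k ≤ n - k), e1]
      rw [e1, e2, show (2:ℚ) ^ (n - k) * (2 ^ k * ↑((n - k).choose k) * ↑(n.choose k))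
          = 2 ^ (n - k + k) * (↑(n.choose k) * ↑((n - k).choose k)) from by rw [pow_add]; ring,
        show n - k + k = n from by omega]
    · rw [if_neg h, if_neg h]
  rw [Finset.sum_congr rfl hterm]
  rw [Finset.mul_sum]
  rw [← Finset.sum_subset (Finset.range_subset_range.2 (by omega : n / 2 + 1 ≤ n + 1))]
  · exact Finset.sum_congr rfl fun k hk => by
      rw [Finset.mem_range] at hk
      rw [if_pos (by omega : 2 * k ≤ n)]
  · intro k _ hk
    rw [Finset.mem_range, not_lt] at hk
    rw [if_neg (by omega)]

lemma coeffA (n : ℕ) :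
    (((C 3 + ((X : ℚ[X]) + C 1) ^ 2) ^ n)).coeff n =
      ∑ k ∈ Finset.range (n / 2 + 1),
        (n.choose k : ℚ) * 3 ^ k * ((2 * n - 2 * k).choose n : ℚ) := by
  rw [add_pow, finset_sum_coeff]
  have hterm : ∀ k ∈ Finset.range (n + 1),
      ((C 3 : ℚ[X]) ^ k * ((X + C 1) ^ 2) ^ (n - k) * (n.choose k : ℚ[X])).coeff n =
        (n.choose k : ℚ) * 3 ^ k * ((2 * n - 2 * k).choose n : ℚ) := by
    intro k hk
    rw [Finset.mem_range] at hk
    rw [← C_pow, ← C_eq_natCast, mul_assoc, coeff_C_mul, coeff_mul_C, ← pow_mul,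
      coeff_X_add_C_pow]
    rw [show 2 * (n - k) = 2 * n - 2 * k from by omega]
    ring
  rw [Finset.sum_congr rfl hterm]
  symm
  apply Finset.sum_subset (Finset.range_subset_range.2 (by omega : n / 2 + 1 ≤ n + 1))
  intro k hk hk'
  rw [Finset.mem_range, not_lt] at hk'
  rw [Finset.mem_range] at hk
  rw [Nat.choose_eq_zero_of_lt (by omega : 2 * n - 2 * k < n)]
  push_cast; ring


lemma keyQ (n : ℕ) :
    2 ^ n * ∑ k ∈ Finset.range (n / 2 + 1), ((n.choose k : ℚ) * ((n - k).choose k : ℚ)) =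
      ∑ k ∈ Finset.range (n / 2 + 1),
        (n.choose k : ℚ) * 3 ^ k * ((2 * n - 2 * k).choose n : ℚ) := by
  rw [← coeffB, ← coeffA]
  have : ((X : ℚ[X]) ^ 2 + C 2 * (X + C 2)) = (C 3 + ((X : ℚ[X]) + C 1) ^ 2) := by
    simp only [map_ofNat, C_1]
    ring
  rw [this]

lemma cx (s : ℂ) (hs : s ≠ 0) (hs3 : s ^ 2 = 3) (m k : ℕ) (a b : ℂ) :
    Complex.I ^ (m + 2 * k) * s ^ (m + 2 * k) *
      ((-1) ^ k * a * b * (-Complex.I / s) ^ m) = a * 3 ^ k * b := by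
  have h1 : Complex.I * (-Complex.I) = 1 := by
    rw [mul_neg, Complex.I_mul_I, neg_neg]
  have hsm : s ^ m ≠ 0 := pow_ne_zero _ hs
  rw [div_pow, pow_add, pow_add, pow_mul, pow_mul, Complex.I_sq, hs3]
  field_simp
  rw [show Complex.I ^ m * ((-1 : ℂ) ^ k) ^ 2 * a * b * (-Complex.I) ^ m
      = ((Complex.I * (-Complex.I)) ^ m) * (((-1 : ℂ) * (-1)) ^ k) * (a * b) from by
        rw [mul_pow, mul_pow]; ring, h1]
  ring

/-- `c_n = iⁿ · 3^{n/2} · P_n(-i/√3)`, where `3^{n/2} = (√3)ⁿ`. -/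
theorem centralTrinomial_eq_legendre (n : ℕ) :
    (centralTrinomial n : ℂ) =
      Complex.I ^ n * ((Real.sqrt 3 : ℂ)) ^ n *
        legendreC n (-Complex.I / (Real.sqrt 3 : ℂ)) := by
  set s : ℂ := (Real.sqrt 3 : ℂ) with hsdef
  have hs3 : s ^ 2 = 3 := by
    rw [hsdef, ← Complex.ofReal_pow, Real.sq_sqrt (by norm_num : (0:ℝ) ≤ 3)]
    norm_num
  have hs : s ≠ 0 := by
    intro h
    rw [h] at hs3
    norm_num at hs3
  have h1 : (centralTrinomial n : ℂ)
      = ∑ k ∈ Finset.range (n / 2 + 1), (n.choose k : ℂ) * ((n - k).choose k : ℂ) := by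
    rw [centralTrinomial]
    push_cast
    refine Finset.sum_congr rfl fun k hk => ?_
    rw [Finset.mem_range] at hk
    exact term_eq n k (by omega)
  have h2 : (2:ℂ) ^ n * ∑ k ∈ Finset.range (n / 2 + 1),
        (n.choose k : ℂ) * ((n - k).choose k : ℂ)
      = ∑ k ∈ Finset.range (n / 2 + 1),
        (n.choose k : ℂ) * 3 ^ k * ((2 * n - 2 * k).choose n : ℂ) := by
    exact_mod_cast congrArg (fun q : ℚ => (q : ℂ)) (keyQ n)
  rw [h1, legendreC]
  symm
  calc Complex.I ^ n * s ^ n * ((1 / 2 ^ n) * ∑ k ∈ Finset.range (n / 2 + 1),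
        (-1) ^ k * (n.choose k : ℂ) * ((2 * n - 2 * k).choose n : ℂ)
          * (-Complex.I / s) ^ (n - 2 * k))
      = (1 / 2 ^ n) * ∑ k ∈ Finset.range (n / 2 + 1), Complex.I ^ n * s ^ n *
          ((-1) ^ k * (n.choose k : ℂ) * ((2 * n - 2 * k).choose n : ℂ)
            * (-Complex.I / s) ^ (n - 2 * k)) := by
        rw [mul_left_comm, Finset.mul_sum]
    _ = (1 / 2 ^ n) * ∑ k ∈ Finset.range (n / 2 + 1),
          (n.choose k : ℂ) * 3 ^ k * ((2 * n - 2 * k).choose n : ℂ) := by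
        congr 1
        refine Finset.sum_congr rfl fun k hk => ?_
        rw [Finset.mem_range] at hk
        have hx := cx s hs hs3 (n - 2 * k) k (n.choose k : ℂ) ((2 * n - 2 * k).choose n : ℂ)
        rw [show n - 2 * k + 2 * k = n from by omega] at hx
        exact hx
    _ = (1 / 2 ^ n) * ((2:ℂ) ^ n * ∑ k ∈ Finset.range (n / 2 + 1),
          (n.choose k : ℂ) * ((n - k).choose k : ℂ)) := by rw [h2]
    _ = ∑ k ∈ Finset.range (n / 2 + 1), (n.choose k : ℂ) * ((n - k).choose k : ℂ) := by
        rw [one_div, inv_mul_cancel_left₀ (pow_ne_zero _ two_ne_zero)]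
end

section
/- The central trinomial coefficients satisfy the three-term recurrence (n+1)·c_{n+1} = (2n+1)·c_n + 3n·c_{n-1} for every n ≥ 1. -/
open Finset

/-- Trinomial term with an explicit indicator, so it is zero out of range. -/
noncomputable def ctT (m k : ℕ) : ℚ :=
  if 2 * k ≤ m then
    (m.factorial : ℚ) / ((k.factorial : ℚ) ^ 2 * ((m - 2 * k).factorial : ℚ))
  else 0

lemma factorial_cast_ne (a : ℕ) : ((a.factorial : ℚ)) ≠ 0 := by
  exact_mod_cast (Nat.factorial_pos a).ne'

lemma sum_ctT (m M : ℕ) (h : m / 2 + 1 ≤ M) :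
    ∑ k ∈ Finset.range M, ctT m k = centralTrinomial m := by
  rw [centralTrinomial]
  rw [← Finset.sum_subset (Finset.range_subset_range.mpr h)
      (fun x _ hx => by
        rw [ctT, if_neg]
        simp only [Finset.mem_range] at hx
        omega)]
  refine Finset.sum_congr rfl fun k hk => ?_
  simp only [Finset.mem_range] at hk
  rw [ctT, if_pos (by omega)]

/-- The key WZ-style termwise identity, with certificate G(k) = -4k² T(m+2,k). -/
lemma ctT_star (m k : ℕ) :
    ((m : ℚ) + 2) ^ 2 * ctT (m + 2) k - (2 * (m : ℚ) + 3) * ((m : ℚ) + 2) * ctT (m + 1) k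
      - 3 * ((m : ℚ) + 1) * ((m : ℚ) + 2) * ctT m k
    = (-(4 * ((k : ℚ) + 1) ^ 2 * ctT (m + 2) (k + 1))) - (-(4 * (k : ℚ) ^ 2 * ctT (m + 2) k)) := by
  rcases le_or_gt (2 * k) m with h1 | h1
  · -- generic case 2k ≤ m
    obtain ⟨j, rfl⟩ : ∃ j, m = 2 * k + j := ⟨m - 2 * k, by omega⟩
    rw [ctT, ctT, ctT, ctT, if_pos (by omega), if_pos (by omega), if_pos (by omega),
      if_pos (by omega)]
    rw [show 2 * k + j + 2 - 2 * k = j + 2 by omega,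
      show 2 * k + j + 1 - 2 * k = j + 1 by omega,
      show 2 * k + j - 2 * k = j by omega,
      show 2 * k + j + 2 - 2 * (k + 1) = j by omega,
      show (2 * k + j + 2) = (2 * k + j + 1) + 1 by ring,
      show (j + 2) = (j + 1) + 1 by ring]
    rw [Nat.factorial_succ (2 * k + j + 1), Nat.factorial_succ (2 * k + j),
      Nat.factorial_succ (j + 1), Nat.factorial_succ j, Nat.factorial_succ k]
    push_cast
    have hk := factorial_cast_ne k
    have hj := factorial_cast_ne j
    have h2k := factorial_cast_ne (2 * k + j)
    field_simp
    ring
  rcases (show 2 * k = m + 1 ∨ 2 * k = m + 2 ∨ m + 3 ≤ 2 * k by omega) with h2 | h2 | h2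
  · -- 2k = m+1, so m = 2j+1, k = j+1
    obtain ⟨j, rfl⟩ : ∃ j, m = 2 * j + 1 := ⟨k - 1, by omega⟩
    have hk : k = j + 1 := by omega
    subst hk
    rw [ctT, ctT, ctT, ctT, if_pos (by omega), if_pos (by omega), if_neg (by omega),
      if_neg (by omega)]
    rw [show 2 * j + 1 + 2 - 2 * (j + 1) = 1 by omega,
      show 2 * j + 1 + 1 - 2 * (j + 1) = 0 by omega,
      show (2 * j + 1 + 2) = (2 * j + 1 + 1) + 1 by ring]
    rw [Nat.factorial_succ (2 * j + 1 + 1), Nat.factorial_one, Nat.factorial_zero]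
    push_cast
    have hj := factorial_cast_ne (j + 1)
    have h2j := factorial_cast_ne (2 * j + 1 + 1)
    field_simp
    ring
  · -- 2k = m+2, so m = 2j, k = j+1
    obtain ⟨j, rfl⟩ : ∃ j, m = 2 * j := ⟨k - 1, by omega⟩
    have hk : k = j + 1 := by omega
    subst hk
    rw [ctT, ctT, ctT, ctT, if_pos (by omega), if_neg (by omega), if_neg (by omega),
      if_neg (by omega)]
    rw [show 2 * j + 2 - 2 * (j + 1) = 0 by omega, Nat.factorial_zero]
    push_cast
    ring
  · -- 2k ≥ m+3 : everything vanishes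
    rw [ctT, ctT, ctT, ctT, if_neg (by omega), if_neg (by omega), if_neg (by omega),
      if_neg (by omega)]
    ring

theorem centralTrinomial_recurrence (n : ℕ) (hn : 1 ≤ n) :
    ((n : ℚ) + 1) * centralTrinomial (n + 1) =
      (2 * (n : ℚ) + 1) * centralTrinomial n + 3 * (n : ℚ) * centralTrinomial (n - 1) := by
  obtain ⟨m, rfl⟩ : ∃ m, n = m + 1 := ⟨n - 1, by omega⟩
  set M := m / 2 + 2 with hM
  have hT0 : ctT (m + 2) M = 0 := by rw [ctT, if_neg (by omega)]
  have h1 : ∑ k ∈ Finset.range M,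
      (((m : ℚ) + 2) ^ 2 * ctT (m + 2) k - (2 * (m : ℚ) + 3) * ((m : ℚ) + 2) * ctT (m + 1) k
        - 3 * ((m : ℚ) + 1) * ((m : ℚ) + 2) * ctT m k) = 0 := by
    rw [Finset.sum_congr rfl fun k _ => ctT_star m k]
    have t := Finset.sum_range_sub (fun k : ℕ => -(4 * (k : ℚ) ^ 2 * ctT (m + 2) k)) M
    push_cast at t
    rw [t, hT0]
    norm_num
  rw [Finset.sum_sub_distrib, Finset.sum_sub_distrib, ← Finset.mul_sum, ← Finset.mul_sum,
    ← Finset.mul_sum, sum_ctT (m + 2) M (by omega), sum_ctT (m + 1) M (by omega),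
    sum_ctT m M (by omega)] at h1
  have hrw : m + 1 - 1 = m := by omega
  rw [hrw]
  push_cast
  refine mul_left_cancel₀ (show ((m : ℚ) + 2) ≠ 0 by positivity) ?_
  linear_combination h1
end

section
/- For every n ≥ 1, the central trinomial coefficients and Motzkin numbers satisfy c_{n+1} = c_n + 2n·m_{n-1}. -/
open Finset

lemma key (j d : ℕ) :
    (((2*j+d+3).factorial : ℚ)) / (((j+1).factorial : ℚ)^2 * ((d+1).factorial : ℚ))
      - ((2*j+d+2).factorial : ℚ) / (((j+1).factorial : ℚ)^2 * (d.factorial : ℚ))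
    = 2 * ((2:ℚ)*j+d+2) * ((2*j+d+1).factorial : ℚ)
        / ((j.factorial : ℚ) * ((j+1).factorial : ℚ) * ((d+1).factorial : ℚ)) := by
  have h1 : ((2*j+d+3).factorial : ℚ)
      = (2*(j:ℚ)+d+3) * (2*(j:ℚ)+d+2) * ((2*j+d+1).factorial : ℚ) := by
    rw [show 2*j+d+3 = (2*j+d+1)+1+1 from by ring, Nat.factorial_succ, Nat.factorial_succ]
    push_cast; ring
  have h2 : (((d+1).factorial : ℚ)) = (d+1) * (d.factorial : ℚ) := by
    rw [Nat.factorial_succ]; push_cast; ring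
  have h3 : (((j+1).factorial : ℚ)) = (j+1) * (j.factorial : ℚ) := by
    rw [Nat.factorial_succ]; push_cast; ring
  have h4 : ((2*j+d+2).factorial : ℚ) = (2*(j:ℚ)+d+2) * ((2*j+d+1).factorial : ℚ) := by
    rw [show 2*j+d+2 = (2*j+d+1)+1 from by ring, Nat.factorial_succ]; push_cast; ring
  have hj : (j.factorial : ℚ) ≠ 0 := Nat.cast_ne_zero.mpr (Nat.factorial_ne_zero _)
  have hd : (d.factorial : ℚ) ≠ 0 := Nat.cast_ne_zero.mpr (Nat.factorial_ne_zero _)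
  rw [h1, h2, h3, h4]
  have hj1 : ((j:ℚ)+1) ≠ 0 := by positivity
  have hd1 : ((d:ℚ)+1) ≠ 0 := by positivity
  field_simp
  ring

lemma key2_s13 (m : ℕ) :
    (((2*m+2).factorial : ℚ)) / (((m+1).factorial : ℚ)^2)
    = 2 * (2*(m:ℚ)+1) * ((2*m).factorial : ℚ) / ((m.factorial : ℚ) * ((m+1).factorial : ℚ)) := by
  have h1 : ((2*m+2).factorial : ℚ)
      = (2*(m:ℚ)+2) * (2*(m:ℚ)+1) * ((2*m).factorial : ℚ) := by
    rw [show 2*m+2 = (2*m)+1+1 from by ring, Nat.factorial_succ, Nat.factorial_succ]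
    push_cast; ring
  have h3 : (((m+1).factorial : ℚ)) = (m+1) * (m.factorial : ℚ) := by
    rw [Nat.factorial_succ]; push_cast; ring
  have hm : (m.factorial : ℚ) ≠ 0 := Nat.cast_ne_zero.mpr (Nat.factorial_ne_zero _)
  have hm1 : ((m:ℚ)+1) ≠ 0 := by positivity
  rw [h1, h3]
  field_simp

lemma main_aux (n M : ℕ) (h2M : 2*M ≤ n) :
    ∑ k ∈ Finset.range (M+1),
      ((n+1).factorial : ℚ) / ((k.factorial : ℚ)^2 * ((n+1 - 2*k).factorial : ℚ))
    - ∑ k ∈ Finset.range (M+1),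
      (n.factorial : ℚ) / ((k.factorial : ℚ)^2 * ((n - 2*k).factorial : ℚ))
    = 2 * (n : ℚ) * ∑ j ∈ Finset.range M,
      ((n-1).factorial : ℚ) / ((j.factorial : ℚ) * ((j+1).factorial : ℚ) * ((n-1 - 2*j).factorial : ℚ)) := by
  rw [Finset.sum_range_succ', Finset.sum_range_succ']
  rw [show (n+1 - 2*0 : ℕ) = n+1 from by omega, show (n - 2*0 : ℕ) = n from by omega]
  have hA : ((n+1).factorial : ℚ) / (((0:ℕ).factorial : ℚ)^2 * ((n+1).factorial : ℚ)) = 1 := by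
    simp [Nat.factorial_ne_zero]
  have hB : ((n).factorial : ℚ) / (((0:ℕ).factorial : ℚ)^2 * ((n).factorial : ℚ)) = 1 := by
    simp [Nat.factorial_ne_zero]
  rw [hA, hB, Finset.mul_sum]
  rw [show ∀ a b : ℚ, a + 1 - (b + 1) = a - b from fun a b => by ring,
      ← Finset.sum_sub_distrib]
  refine Finset.sum_congr rfl fun j hj => ?_
  simp only [Finset.mem_range] at hj
  obtain ⟨d, hd⟩ : ∃ d, n = 2*j+d+2 := ⟨n-2*j-2, by omega⟩
  rw [hd]
  rw [show (2*j+d+2+1 - 2*(j+1) : ℕ) = d+1 from by omega,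
      show (2*j+d+2 - 2*(j+1) : ℕ) = d from by omega,
      show (2*j+d+2-1 - 2*j : ℕ) = d+1 from by omega,
      show (2*j+d+2+1 : ℕ) = 2*j+d+3 from by omega,
      show (2*j+d+2-1 : ℕ) = 2*j+d+1 from by omega]
  rw [key j d]
  push_cast
  ring

theorem centralTrinomial_motzkin_recurrence (n : ℕ) (hn : 1 ≤ n) :
    centralTrinomial (n + 1) = centralTrinomial n + 2 * (n : ℚ) * motzkin (n - 1) := by
  unfold centralTrinomial motzkin
  rw [← sub_eq_iff_eq_add']
  rcases Nat.even_or_odd n with ⟨m, hm⟩ | ⟨m, hm⟩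
  · -- even case, n = m + m, m ≥ 1
    have hm1 : 1 ≤ m := by omega
    subst hm
    rw [show (m+m+1)/2 = m from by omega, show (m+m)/2 = m from by omega,
        show (m+m-1)/2+1 = m from by omega]
    exact main_aux (m+m) m (by omega)
  · -- odd case, n = 2*m+1
    subst hm
    rw [show (2*m+1+1)/2 = m+1 from by omega, show (2*m+1)/2 = m from by omega,
        show (2*m+1-1) = 2*m from by omega, show (2*m)/2 = m from by omega]
    have haux := main_aux (2*m+1) m (by omega)
    have e1 := Finset.sum_range_succ
      (fun k => ((2*m+1+1).factorial : ℚ) / ((k.factorial : ℚ)^2 * ((2*m+1+1 - 2*k).factorial : ℚ))) (m+1)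
    have e3 := Finset.sum_range_succ
      (fun j => ((2*m).factorial : ℚ) / ((j.factorial : ℚ) * ((j+1).factorial : ℚ) * ((2*m - 2*j).factorial : ℚ))) m
    have htop : ((2*m+1+1).factorial : ℚ) / (((m+1).factorial : ℚ)^2 * ((2*m+1+1 - 2*(m+1)).factorial : ℚ))
        = 2 * ((2*m+1 : ℕ) : ℚ) * (((2*m).factorial : ℚ) / ((m.factorial : ℚ) * ((m+1).factorial : ℚ) * ((2*m - 2*m).factorial : ℚ))) := by
      rw [show (2*m+1+1 - 2*(m+1) : ℕ) = 0 from by omega, show (2*m - 2*m : ℕ) = 0 from by omega,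
          show (2*m+1+1 : ℕ) = 2*m+2 from by omega]
      simp only [Nat.factorial_zero, Nat.cast_one, mul_one]
      rw [key2_s13 m]
      push_cast
      ring
    have hsub : ((2*m+1-1 : ℕ)) = 2*m := by omega
    rw [hsub] at haux
    push_cast at haux e1 e3 htop ⊢
    linear_combination e1 + haux + htop - (2*(2*(m:ℚ)+1))*e3
end

section
/- For every natural number n, the Motzkin number satisfies m_n = (c_{n+2} - c_{n+1}) / (2(n+1)); equivalently, 2(n+1)·m_n = c_{n+2} - c_{n+1}. -/
open Finset

lemma key_s14 (n k : ℕ) (h : 2 * k ≤ n) :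
    ((n+2).factorial : ℚ) / (((k+1).factorial : ℚ) ^ 2 * ((n + 2 - 2 * (k+1)).factorial : ℚ))
      - (if 2 * (k+1) ≤ n + 1 then
          ((n+1).factorial : ℚ) / (((k+1).factorial : ℚ) ^ 2 * ((n + 1 - 2 * (k+1)).factorial : ℚ))
        else 0)
    = 2 * ((n : ℚ) + 1) *
        ((n.factorial : ℚ) / ((k.factorial : ℚ) * ((k+1).factorial : ℚ) * ((n - 2 * k).factorial : ℚ))) := by
  have h1 : n + 2 - 2 * (k+1) = n - 2 * k := by omega
  rw [h1]
  have fk : ((k+1).factorial : ℚ) = (k+1) * k.factorial := by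
    rw [Nat.factorial_succ]; push_cast; ring
  have f2 : ((n+2).factorial : ℚ) = (n+2) * (n+1) * n.factorial := by
    rw [Nat.factorial_succ, Nat.factorial_succ]; push_cast; ring
  have f1 : ((n+1).factorial : ℚ) = (n+1) * n.factorial := by
    rw [Nat.factorial_succ]; push_cast; ring
  have hknz : (k.factorial : ℚ) ≠ 0 := Nat.cast_ne_zero.2 k.factorial_ne_zero
  have hkc : ((k:ℚ)+1) ≠ 0 := by positivity
  rcases lt_or_eq_of_le h with hlt | heq
  · have hif : 2 * (k+1) ≤ n + 1 := by omega
    rw [if_pos hif]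
    obtain ⟨m, hm⟩ : ∃ m, n - 2*k = m + 1 := ⟨n - 2*k - 1, by omega⟩
    have h2 : n + 1 - 2 * (k+1) = m := by omega
    have hn : (n:ℚ) = 2*k + m + 1 := by
      have : n = 2*k + m + 1 := by omega
      exact_mod_cast congrArg (Nat.cast : ℕ → ℚ) this
    have fm : ((m+1).factorial : ℚ) = (m+1) * m.factorial := by
      rw [Nat.factorial_succ]; push_cast; ring
    have hmz : (m.factorial : ℚ) ≠ 0 := Nat.cast_ne_zero.2 m.factorial_ne_zero
    have hnfz : (n.factorial : ℚ) ≠ 0 := Nat.cast_ne_zero.2 n.factorial_ne_zero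
    have hmc : ((m:ℚ)+1) ≠ 0 := by positivity
    rw [h2, hm, fk, f2, f1, fm, hn]
    field_simp
    ring
  · rw [if_neg (by omega)]
    have h4 : n - 2*k = 0 := by omega
    have hne : (n:ℚ) + 2 = 2 * ((k:ℚ)+1) := by
      have : (n:ℚ) = 2*k := by exact_mod_cast heq.symm
      linarith
    rw [h4, fk, f2, hne, Nat.factorial_zero]
    push_cast
    field_simp
    ring

theorem motzkin_eq_centralTrinomial_diff (n : ℕ) :
    motzkin n = (centralTrinomial (n + 2) - centralTrinomial (n + 1)) / (2 * ((n : ℚ) + 1)) ∧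
      2 * ((n : ℚ) + 1) * motzkin n = centralTrinomial (n + 2) - centralTrinomial (n + 1) := by
  have hden : 2 * ((n : ℚ) + 1) ≠ 0 := by positivity
  have main : 2 * ((n : ℚ) + 1) * motzkin n = centralTrinomial (n + 2) - centralTrinomial (n + 1) := by
    have e2 : centralTrinomial (n + 2)
        = ∑ k ∈ Finset.range (n / 2 + 2),
            ((n+2).factorial : ℚ) / ((k.factorial : ℚ) ^ 2 * ((n + 2 - 2 * k).factorial : ℚ)) := by
      unfold centralTrinomial
      rw [show (n+2)/2 + 1 = n/2 + 2 by omega]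
    have e1 : centralTrinomial (n + 1)
        = ∑ k ∈ Finset.range (n / 2 + 2),
            (if 2 * k ≤ n + 1 then
              ((n+1).factorial : ℚ) / ((k.factorial : ℚ) ^ 2 * ((n + 1 - 2 * k).factorial : ℚ))
            else 0) := by
      unfold centralTrinomial
      rcases Nat.even_or_odd n with ⟨m, hm⟩ | ⟨m, hm⟩
      · have hr : (n+1)/2 + 1 = n/2 + 1 := by omega
        rw [hr, show n/2 + 2 = (n/2 + 1) + 1 from rfl]
        conv_rhs => rw [Finset.sum_range_succ]
        rw [if_neg (by omega : ¬ 2 * (n/2 + 1) ≤ n + 1), add_zero]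
        apply Finset.sum_congr rfl
        intro k hk
        rw [Finset.mem_range] at hk
        rw [if_pos (by omega)]
      · have hr : (n+1)/2 + 1 = n/2 + 2 := by omega
        rw [hr]
        apply Finset.sum_congr rfl
        intro k hk
        rw [Finset.mem_range] at hk
        rw [if_pos (by omega)]
    rw [e2, e1, ← Finset.sum_sub_distrib, Finset.sum_range_succ']
    have h0 : ((n+2).factorial : ℚ) / (((0:ℕ).factorial : ℚ) ^ 2 * ((n + 2 - 2 * 0).factorial : ℚ))
        - (if 2 * 0 ≤ n + 1 then
            ((n+1).factorial : ℚ) / (((0:ℕ).factorial : ℚ) ^ 2 * ((n + 1 - 2 * 0).factorial : ℚ))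
          else 0) = 0 := by
      rw [if_pos (by omega)]
      simp only [Nat.factorial_zero, Nat.mul_zero, Nat.sub_zero, Nat.cast_one, one_pow, one_mul]
      rw [div_self (Nat.cast_ne_zero.2 (n+2).factorial_ne_zero),
        div_self (Nat.cast_ne_zero.2 (n+1).factorial_ne_zero), sub_self]
    rw [h0, add_zero]
    unfold motzkin
    rw [Finset.mul_sum]
    apply Finset.sum_congr rfl
    intro k hk
    rw [Finset.mem_range] at hk
    rw [key_s14 n k (by omega)]
  exact ⟨by rw [← main]; field_simp, main⟩
end

section
/- For every natural number n and natural number p, the p-associated central trinomial coefficients satisfy 2(n+1)·c_n^{p+1} = c_{n+2}^p - c_{n+1}^p. -/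
open Finset

/-- The `p`-associated central trinomial coefficient. -/
noncomputable def assocCTC (n p : ℕ) : ℚ :=
  (n.factorial : ℚ) * ∑ k ∈ Finset.range (n / 2 + 1),
    1 / (((n - 2 * k).factorial : ℚ) * (k.factorial : ℚ) * ((k + p).factorial : ℚ))

private lemma facQ_ne (m : ℕ) : ((m.factorial : ℚ)) ≠ 0 := by
  exact_mod_cast m.factorial_ne_zero

private lemma sums_even (m : ℕ) (f g h : ℕ → ℚ)
    (h0 : g 0 = h 0)
    (hk : ∀ k < m, f k = g (k + 1) - h (k + 1))
    (hm : f m = g (m + 1)) :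
    ∑ k ∈ range (m + 1), f k = ∑ k ∈ range (m + 2), g k - ∑ k ∈ range (m + 1), h k := by
  rw [Finset.sum_range_succ' g (m + 1), Finset.sum_range_succ' h m, Finset.sum_range_succ f m,
    Finset.sum_range_succ (fun k => g (k + 1)) m]
  have : ∑ k ∈ range m, f k = ∑ k ∈ range m, (g (k + 1) - h (k + 1)) := by
    refine Finset.sum_congr rfl fun k hkm => hk k (Finset.mem_range.mp hkm)
  rw [this, Finset.sum_sub_distrib, hm, h0]
  ring

private lemma sums_odd (m : ℕ) (f g h : ℕ → ℚ)
    (h0 : g 0 = h 0)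
    (hk : ∀ k ≤ m, f k = g (k + 1) - h (k + 1)) :
    ∑ k ∈ range (m + 1), f k = ∑ k ∈ range (m + 2), g k - ∑ k ∈ range (m + 2), h k := by
  rw [Finset.sum_range_succ' g (m + 1), Finset.sum_range_succ' h (m + 1)]
  have : ∑ k ∈ range (m + 1), f k = ∑ k ∈ range (m + 1), (g (k + 1) - h (k + 1)) := by
    refine Finset.sum_congr rfl fun k hkm => hk k (Nat.lt_succ_iff.mp (Finset.mem_range.mp hkm))
  rw [this, Finset.sum_sub_distrib, h0]
  ring

theorem assocCTC_recurrence (n p : ℕ) :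
    2 * ((n : ℚ) + 1) * assocCTC n (p + 1) = assocCTC (n + 2) p - assocCTC (n + 1) p := by
  rcases Nat.even_or_odd n with ⟨m, rfl⟩ | ⟨m, rfl⟩
  · -- n = m + m
    rw [assocCTC, assocCTC, assocCTC,
      show (m + m) / 2 + 1 = m + 1 by omega,
      show (m + m + 2) / 2 + 1 = m + 2 by omega,
      show (m + m + 1) / 2 + 1 = m + 1 by omega]
    simp only [Finset.mul_sum]
    refine sums_even m _ _ _ ?_ ?_ ?_
    · simp only [Nat.mul_zero, Nat.sub_zero, Nat.factorial_zero, Nat.zero_add]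
      push_cast
      field_simp [facQ_ne]
    · intro k hkm
      obtain ⟨j, rfl⟩ : ∃ j, m = k + j + 1 := ⟨m - k - 1, by omega⟩
      simp only [show (k + j + 1) + (k + j + 1) - 2 * k = 2 * j + 2 by omega,
        show (k + j + 1) + (k + j + 1) + 2 - 2 * (k + 1) = 2 * j + 2 by omega,
        show (k + j + 1) + (k + j + 1) + 1 - 2 * (k + 1) = 2 * j + 1 by omega]
      simp only [show (k + j + 1) + (k + j + 1) + 2 = (2 * k + 2 * j + 2) + 2 by omega]
      simp only [show (k + j + 1) + (k + j + 1) + 1 = (2 * k + 2 * j + 2) + 1 by omega]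
      simp only [show (k + j + 1) + (k + j + 1) = 2 * k + 2 * j + 2 by omega]
      have e1 : (((2 * k + 2 * j + 2) + 2).factorial : ℚ)
          = ((2 * k + 2 * j + 2 : ℕ) + 2) * ((2 * k + 2 * j + 2 : ℕ) + 1)
            * ((2 * k + 2 * j + 2).factorial : ℚ) := by
        rw [Nat.factorial_succ, Nat.factorial_succ]; push_cast; ring
      have e2 : (((2 * k + 2 * j + 2) + 1).factorial : ℚ)
          = ((2 * k + 2 * j + 2 : ℕ) + 1) * ((2 * k + 2 * j + 2).factorial : ℚ) := by
        rw [Nat.factorial_succ]; push_cast; ring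
      have e3 : ((2 * j + 2).factorial : ℚ) = ((2 * j : ℕ) + 2) * ((2 * j + 1).factorial : ℚ) := by
        rw [show 2 * j + 2 = (2 * j + 1) + 1 by ring, Nat.factorial_succ]; push_cast; ring
      have e4 : ((k + 1).factorial : ℚ) = ((k : ℕ) + 1) * (k.factorial : ℚ) := by
        rw [Nat.factorial_succ]; push_cast; ring
      rw [e1, e2, e3, e4, show (k + 1 + p) = (k + (p + 1)) by omega]
      push_cast
      field_simp [facQ_ne]
      ring
    · simp only [show (m + m) - 2 * m = 0 by omega,
        show (m + m + 2) - 2 * (m + 1) = 0 by omega]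
      simp only [show (m + m + 2) = (2 * m) + 2 by omega]
      simp only [show (m + m) = 2 * m by omega]
      have e1 : (((2 * m) + 2).factorial : ℚ)
          = ((2 * m : ℕ) + 2) * ((2 * m : ℕ) + 1) * ((2 * m).factorial : ℚ) := by
        rw [Nat.factorial_succ, Nat.factorial_succ]; push_cast; ring
      have e4 : ((m + 1).factorial : ℚ) = ((m : ℕ) + 1) * (m.factorial : ℚ) := by
        rw [Nat.factorial_succ]; push_cast; ring
      rw [e1, e4, show (m + 1 + p) = (m + (p + 1)) by omega]
      push_cast
      field_simp [facQ_ne]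
  · -- n = 2 * m + 1
    rw [assocCTC, assocCTC, assocCTC,
      show (2 * m + 1) / 2 + 1 = m + 1 by omega,
      show (2 * m + 1 + 2) / 2 + 1 = m + 2 by omega,
      show (2 * m + 1 + 1) / 2 + 1 = m + 2 by omega]
    simp only [Finset.mul_sum]
    refine sums_odd m _ _ _ ?_ ?_
    · simp only [Nat.mul_zero, Nat.sub_zero, Nat.factorial_zero, Nat.zero_add]
      push_cast
      field_simp [facQ_ne]
    · intro k hkm
      obtain ⟨j, rfl⟩ : ∃ j, m = k + j := ⟨m - k, by omega⟩
      simp only [show 2 * (k + j) + 1 - 2 * k = 2 * j + 1 by omega,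
        show 2 * (k + j) + 1 + 2 - 2 * (k + 1) = 2 * j + 1 by omega,
        show 2 * (k + j) + 1 + 1 - 2 * (k + 1) = 2 * j by omega]
      simp only [show 2 * (k + j) + 1 + 2 = ((2 * k + 2 * j) + 2) + 1 by omega]
      simp only [show 2 * (k + j) + 1 + 1 = (2 * k + 2 * j) + 2 by omega]
      simp only [show 2 * (k + j) + 1 = (2 * k + 2 * j) + 1 by omega]
      have e1 : ((((2 * k + 2 * j) + 2) + 1).factorial : ℚ)
          = ((2 * k + 2 * j : ℕ) + 3) * ((2 * k + 2 * j : ℕ) + 2)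
            * (((2 * k + 2 * j) + 1).factorial : ℚ) := by
        rw [Nat.factorial_succ, show (2 * k + 2 * j) + 2 = ((2 * k + 2 * j) + 1) + 1 by ring,
          Nat.factorial_succ]; push_cast; ring
      have e2 : (((2 * k + 2 * j) + 2).factorial : ℚ)
          = ((2 * k + 2 * j : ℕ) + 2) * (((2 * k + 2 * j) + 1).factorial : ℚ) := by
        rw [show (2 * k + 2 * j) + 2 = ((2 * k + 2 * j) + 1) + 1 by ring,
          Nat.factorial_succ]; push_cast; ring
      have e3 : ((2 * j + 1).factorial : ℚ) = ((2 * j : ℕ) + 1) * ((2 * j).factorial : ℚ) := by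
        rw [Nat.factorial_succ]; push_cast; ring
      have e4 : ((k + 1).factorial : ℚ) = ((k : ℕ) + 1) * (k.factorial : ℚ) := by
        rw [Nat.factorial_succ]; push_cast; ring
      rw [e1, e2, e3, e4, show (k + 1 + p) = (k + (p + 1)) by omega]
      push_cast
      field_simp [facQ_ne]
      ring
end

section
/- For every natural number n and nonzero real x, the Hermite–Kampé de Fériet polynomial admits the hypergeometric representation H_n(x,y) = x^n · ₂F₀(-n/2, (1-n)/2; ; 4y/x^2), where ₂F₀(a,b;;z) denotes the terminating sum Σ_{k=0}^{⌊n/2⌋} (a)_k (b)_k z^k / k! with Pochhammer symbols (a)_k. -/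
open Finset

/-- Hermite–Kampé de Fériet polynomial. -/
noncomputable def HKdF (n : ℕ) (x y : ℝ) : ℝ :=
  (n.factorial : ℝ) * ∑ k ∈ Finset.range (n / 2 + 1),
    x ^ (n - 2 * k) * y ^ k / ((k.factorial : ℝ) * ((n - 2 * k).factorial : ℝ))

/-- Rising factorial (Pochhammer symbol) `(a)_k = a(a+1)⋯(a+k-1)` for real `a`. -/
noncomputable def risingFactorial (a : ℝ) (k : ℕ) : ℝ :=
  ∏ i ∈ Finset.range k, (a + i)

lemma rf_key (n k : ℕ) (h : 2 * k ≤ n) :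
    risingFactorial (-(n : ℝ) / 2) k * risingFactorial ((1 - (n : ℝ)) / 2) k * 4 ^ k *
      ((n - 2 * k).factorial : ℝ) = (n.factorial : ℝ) := by
  induction k with
  | zero => simp [risingFactorial]
  | succ k ih =>
    have h2k : 2 * k ≤ n := by omega
    have hm : n - 2 * k = (n - 2 * (k + 1)) + 2 := by omega
    have hfac : ((n - 2 * k).factorial : ℝ) =
        ((n : ℝ) - 2 * k) * ((n : ℝ) - 2 * k - 1) * ((n - 2 * (k + 1)).factorial : ℝ) := by
      rw [hm]
      have : ((n - 2 * (k + 1)) + 2).factorial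
          = ((n - 2 * (k + 1)) + 2) * (((n - 2 * (k + 1)) + 1) * (n - 2 * (k + 1)).factorial) := by
        rw [Nat.factorial_succ, Nat.factorial_succ]
      rw [this]
      push_cast
      have : ((n : ℝ)) - 2 * k = ((n - 2 * (k + 1) : ℕ) : ℝ) + 2 := by
        push_cast [Nat.cast_sub (by omega : 2 * (k + 1) ≤ n)]; ring
      rw [this]; ring
    have := ih h2k
    rw [hfac] at this
    rw [show risingFactorial (-(n : ℝ) / 2) (k + 1)
        = risingFactorial (-(n : ℝ) / 2) k * (-(n : ℝ) / 2 + k) from Finset.prod_range_succ _ _,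
      show risingFactorial ((1 - (n : ℝ)) / 2) (k + 1)
        = risingFactorial ((1 - (n : ℝ)) / 2) k * ((1 - (n : ℝ)) / 2 + k) from
        Finset.prod_range_succ _ _]
    rw [pow_succ]
    linear_combination this

/-- Hypergeometric representation
`H_n(x,y) = xⁿ · ₂F₀(-n/2, (1-n)/2 ;; 4y/x²)`, the `₂F₀` series terminating
at `k = ⌊n/2⌋`. -/
theorem HKdF_hypergeometric (n : ℕ) (x y : ℝ) (hx : x ≠ 0) :
    HKdF n x y =
      x ^ n * ∑ k ∈ Finset.range (n / 2 + 1),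
        risingFactorial (-(n : ℝ) / 2) k * risingFactorial ((1 - (n : ℝ)) / 2) k *
          (4 * y / x ^ 2) ^ k / (k.factorial : ℝ) := by
  rw [HKdF, Finset.mul_sum, Finset.mul_sum]
  refine Finset.sum_congr rfl fun k hk => ?_
  have hk2 : 2 * k ≤ n := by
    simp only [Finset.mem_range] at hk; omega
  have key := rf_key n k hk2
  have hxn : x ^ n = x ^ (n - 2 * k) * (x ^ 2) ^ k := by
    rw [← pow_mul, ← pow_add]; congr 1; omega
  have hkf : ((k.factorial : ℝ)) ≠ 0 := by positivity
  have hnkf : (((n - 2 * k).factorial : ℝ)) ≠ 0 := by positivity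
  rw [hxn, div_pow, mul_pow]
  field_simp
  rw [neg_div] at key
  linear_combination (-(y ^ k)) * key
end
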